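/- Let r ≥ 3, δ ∈ [0, 1/(2r)], and let G be an r-partite graph on parts of size n with minimum cross-degree at least (1−δ)n. Then for any edge xy of G with x ∈ V_i and y ∈ V_j (i ≠ j), the number z_{xy} of r-cliques containing xy satisfies z_{xy} ≥ k_{[r]∖{i,j}}(G) − 2δ(r−2)n · max_{k ∉ {i,j}} k_{[r]∖{i,j,k}}(G), where k_I(G) counts cliques with one vertex in each V_ℓ, ℓ ∈ I. In particular, every edge of G lies in at least one copy of K_r when δ ≤ 1/(8r). -/

import Mathlib

open Finset
open scoped Classical

/-!
Let `I = [r] \ {P x, P y}`. A clique counted by `k_I(G)` that is not contained in the common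
neighbourhood of `x` and `y` contains a vertex `w` of a part of `I` that `x` or `y` misses;
there are at most `2δ(r-2)n` such `w`, and deleting `w` leaves a clique counted by
`k_{I \ {P w}}(G)`. The remaining cliques extend by `x, y` to distinct copies of `K_r`.

For the existence of one copy, extend the edge greedily: each of the at most `r - 1` vertices
chosen so far misses at most `δn` vertices of the next part, and `(r - 1)δ < 1`.
-/

/-- The set of cliques of `G` having exactly one vertex in part `V_i` for each `i ∈ I`. -/
noncomputable def partCliques {V : Type*} [Fintype V] [DecidableEq V] {r : ℕ}
    (G : SimpleGraph V) (P : V → Fin r) (I : Finset (Fin r)) : Finset (Finset V) :=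
  Finset.univ.filter fun S => G.IsClique (S : Set V) ∧ S.image P = I ∧ S.card = I.card

lemma card_filter_exists_mem_le {α : Type*} [DecidableEq α] (C : Finset (Finset α))
    (B : Finset α) : #{S ∈ C | ∃ w ∈ B, w ∈ S} ≤ ∑ w ∈ B, #{S ∈ C | w ∈ S} :=
  calc #{S ∈ C | ∃ w ∈ B, w ∈ S} = #(B.biUnion fun w => {S ∈ C | w ∈ S}) := by
        congr 1; ext S; simp only [mem_filter, mem_biUnion]; tauto
    _ ≤ _ := card_biUnion_le

section Density

variable {V : Type*} [Fintype V] {r n : ℕ} {G : SimpleGraph V} {P : V → Fin r} {δ : ℝ}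

lemma card_filter_not_adj_le (ℓ : Fin r) (v : V)
    (hsize : #{u | P u = ℓ} = n) (hdeg : (1 - δ) * n ≤ #{u | P u = ℓ ∧ G.Adj v u}) :
    (#{u | P u = ℓ ∧ ¬ G.Adj v u} : ℝ) ≤ δ * n := by
  have hsplit : #{u | P u = ℓ ∧ G.Adj v u} + #{u | P u = ℓ ∧ ¬ G.Adj v u} = n := by
    rw [← hsize, ← card_filter_add_card_filter_not (s := {u | P u = ℓ}) (G.Adj v),
      filter_filter, filter_filter]
  have : (#{u | P u = ℓ ∧ G.Adj v u} : ℝ) + #{u | P u = ℓ ∧ ¬ G.Adj v u} = n := by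
    exact_mod_cast hsplit
  linarith

lemma card_filter_mem_not_adj_le (hsize : ∀ i : Fin r, #{u | P u = i} = n)
    (hdeg : ∀ (ℓ : Fin r) (v : V), P v ≠ ℓ → (1 - δ) * n ≤ #{u | P u = ℓ ∧ G.Adj v u})
    (J : Finset (Fin r)) {v : V} (hv : P v ∉ J) :
    (#{u | P u ∈ J ∧ ¬ G.Adj v u} : ℝ) ≤ δ * #J * n := by
  rw [card_eq_sum_card_fiberwise (f := P) (t := J) fun u hu => (mem_filter.1 hu).2.1]
  push_cast
  calc ∑ ℓ ∈ J, (#{u ∈ {u | P u ∈ J ∧ ¬ G.Adj v u} | P u = ℓ} : ℝ)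
      = ∑ ℓ ∈ J, (#{u | P u = ℓ ∧ ¬ G.Adj v u} : ℝ) := by
        refine sum_congr rfl fun ℓ hℓ => ?_
        rw [filter_filter]
        congr 3; ext u; constructor
        · rintro ⟨⟨-, h⟩, rfl⟩; exact ⟨rfl, h⟩
        · rintro ⟨rfl, h⟩; exact ⟨⟨hℓ, h⟩, rfl⟩
    _ ≤ ∑ _ℓ ∈ J, δ * n := sum_le_sum fun ℓ hℓ =>
        card_filter_not_adj_le ℓ v (hsize ℓ) (hdeg ℓ v fun h => hv (h ▸ hℓ))
    _ = δ * #J * n := by rw [sum_const, nsmul_eq_mul]; ring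

lemma card_filter_mem_not_adj_or_not_adj_le (hsize : ∀ i : Fin r, #{u | P u = i} = n)
    (hdeg : ∀ (ℓ : Fin r) (v : V), P v ≠ ℓ → (1 - δ) * n ≤ #{u | P u = ℓ ∧ G.Adj v u})
    (J : Finset (Fin r)) {x y : V} (hx : P x ∉ J) (hy : P y ∉ J) :
    (#{w | P w ∈ J ∧ ¬ (G.Adj x w ∧ G.Adj y w)} : ℝ) ≤ 2 * δ * #J * n := by
  have hsub : ({w | P w ∈ J ∧ ¬ (G.Adj x w ∧ G.Adj y w)} : Finset V) ⊆
      ({w | P w ∈ J ∧ ¬ G.Adj x w} : Finset V) ∪ ({w | P w ∈ J ∧ ¬ G.Adj y w} : Finset V) := by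
    intro w; simp only [mem_union, mem_filter, mem_univ, true_and]; tauto
  have hunion := (card_le_card hsub).trans (card_union_le _ _)
  have hunionR : (#{w | P w ∈ J ∧ ¬ (G.Adj x w ∧ G.Adj y w)} : ℝ) ≤
      #{w | P w ∈ J ∧ ¬ G.Adj x w} + #{w | P w ∈ J ∧ ¬ G.Adj y w} := by
    exact_mod_cast hunion
  linarith [card_filter_mem_not_adj_le hsize hdeg J hx, card_filter_mem_not_adj_le hsize hdeg J hy]

lemma exists_forall_adj_of_mul_card_lt (hsize : ∀ i : Fin r, #{u | P u = i} = n)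
    (hdeg : ∀ (ℓ : Fin r) (v : V), P v ≠ ℓ → (1 - δ) * n ≤ #{u | P u = ℓ ∧ G.Adj v u})
    (hn : 0 < n) (a : Fin r) (T : Finset V) (hT : ∀ t ∈ T, P t ≠ a) (hδ : δ * #T < 1) :
    ∃ v, P v = a ∧ ∀ t ∈ T, G.Adj t v := by
  by_contra! h
  have hcover : ({u | P u = a} : Finset V) ⊆ T.biUnion fun t => {u | P u = a ∧ ¬ G.Adj t u} := by
    intro u hu
    obtain ⟨t, ht, hadj⟩ := h u (mem_filter.1 hu).2
    exact mem_biUnion.2 ⟨t, ht, by simp_all⟩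
  have : (n : ℝ) ≤ #T * (δ * n) := calc
    (n : ℝ) = #{u | P u = a} := by rw [hsize]
    _ ≤ ∑ t ∈ T, (#{u | P u = a ∧ ¬ G.Adj t u} : ℝ) := by
        exact_mod_cast (card_le_card hcover).trans card_biUnion_le
    _ ≤ ∑ _t ∈ T, δ * n := sum_le_sum fun t ht =>
        card_filter_not_adj_le a t (hsize a) (hdeg a t (hT t ht))
    _ = #T * (δ * n) := by rw [sum_const, nsmul_eq_mul]
  have hn' : (0 : ℝ) < n := by exact_mod_cast hn
  nlinarith

end Density

section PartCliques

variable {V : Type*} [Fintype V] [DecidableEq V] {r : ℕ} {G : SimpleGraph V} {P : V → Fin r}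
  {I : Finset (Fin r)} {S : Finset V}

lemma mem_partCliques :
    S ∈ partCliques G P I ↔ G.IsClique (S : Set V) ∧ S.image P = I ∧ #S = #I := by
  simp [partCliques]

lemma apply_mem_of_mem_partCliques (hS : S ∈ partCliques G P I) {v : V} (hv : v ∈ S) :
    P v ∈ I :=
  (mem_partCliques.1 hS).2.1 ▸ mem_image_of_mem P hv

lemma injOn_of_mem_partCliques (hS : S ∈ partCliques G P I) : Set.InjOn P S := by
  obtain ⟨-, himg, hcard⟩ := mem_partCliques.1 hS
  exact card_image_iff.1 (by rw [himg, hcard])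

lemma empty_mem_partCliques : (∅ : Finset V) ∈ partCliques G P ∅ := by
  simp [mem_partCliques]

lemma insert_mem_partCliques (hS : S ∈ partCliques G P I) {v : V} (hv : P v ∉ I)
    (hadj : ∀ w ∈ S, G.Adj v w) : insert v S ∈ partCliques G P (insert (P v) I) := by
  obtain ⟨hclique, himg, hcard⟩ := mem_partCliques.1 hS
  have hvS : v ∉ S := fun h => hv (apply_mem_of_mem_partCliques hS h)
  refine mem_partCliques.2 ⟨?_, by rw [image_insert, himg], ?_⟩
  · rw [coe_insert]
    exact hclique.insert fun w hw _ => hadj w hw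
  · rw [card_insert_of_notMem hvS, card_insert_of_notMem hv, hcard]

lemma erase_mem_partCliques (hS : S ∈ partCliques G P I) {w : V} (hw : w ∈ S) :
    S.erase w ∈ partCliques G P (I.erase (P w)) := by
  obtain ⟨hclique, himg, hcard⟩ := mem_partCliques.1 hS
  refine mem_partCliques.2 ⟨hclique.subset (by simp), ?_, ?_⟩
  · rw [← himg, ← sdiff_singleton_eq_erase, ← sdiff_singleton_eq_erase,
      image_sdiff_of_injOn (injOn_of_mem_partCliques hS) (by simpa using hw), image_singleton]
  · rw [card_erase_of_mem hw, card_erase_of_mem (apply_mem_of_mem_partCliques hS hw), hcard]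

lemma mem_cliqueFinset_of_mem_partCliques_univ (hS : S ∈ partCliques G P univ) :
    S ∈ G.cliqueFinset r := by
  obtain ⟨hclique, -, hcard⟩ := mem_partCliques.1 hS
  exact SimpleGraph.mem_cliqueFinset_iff.2 ⟨hclique, by simpa using hcard⟩

lemma card_filter_mem_partCliques_le (w : V) :
    #{S ∈ partCliques G P I | w ∈ S} ≤ #(partCliques G P (I.erase (P w))) := by
  refine card_le_card_of_injOn (·.erase w) (fun S hS => ?_) (fun S₁ hS₁ S₂ hS₂ h => ?_)
  · obtain ⟨hS, hw⟩ := mem_filter.1 hS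
    exact erase_mem_partCliques hS hw
  · rw [← insert_erase (mem_filter.1 hS₁).2, ← insert_erase (mem_filter.1 hS₂).2]
    exact congrArg (insert w) h

lemma card_partCliques_le (I : Finset (Fin r)) (p : V → Prop) [DecidablePred p] :
    #(partCliques G P I) ≤ #{S ∈ partCliques G P I | ∀ w ∈ S, p w}
      + #{w | P w ∈ I ∧ ¬ p w} * I.sup fun k => #(partCliques G P (I.erase k)) := by
  set B : Finset V := {w | P w ∈ I ∧ ¬ p w}
  set M := I.sup fun k => #(partCliques G P (I.erase k))
  have hbad : {S ∈ partCliques G P I | ¬ ∀ w ∈ S, p w} ⊆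
      {S ∈ partCliques G P I | ∃ w ∈ B, w ∈ S} := fun S hS => by
    obtain ⟨hS, hSp⟩ := mem_filter.1 hS
    obtain ⟨w, hwS, hw⟩ : ∃ w ∈ S, ¬ p w := by simpa using hSp
    exact mem_filter.2 ⟨hS, w, by simp [B, apply_mem_of_mem_partCliques hS hwS, hw], hwS⟩
  have hfiber : ∀ w ∈ B, #{S ∈ partCliques G P I | w ∈ S} ≤ M := fun w hw =>
    (card_filter_mem_partCliques_le w).trans
      (le_sup (f := fun k => #(partCliques G P (I.erase k))) (mem_filter.1 hw).2.1)
  calc #(partCliques G P I)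
      = #{S ∈ partCliques G P I | ∀ w ∈ S, p w}
          + #{S ∈ partCliques G P I | ¬ ∀ w ∈ S, p w} :=
        (card_filter_add_card_filter_not _).symm
    _ ≤ #{S ∈ partCliques G P I | ∀ w ∈ S, p w} + ∑ _w ∈ B, M := by
        gcongr
        exact (card_le_card hbad).trans <|
          (card_filter_exists_mem_le _ _).trans (sum_le_sum hfiber)
    _ = _ := by rw [sum_const, smul_eq_mul]

lemma card_filter_forall_adj_le_card_cliques {x y : V} (hxy : G.Adj x y) (hP : P x ≠ P y) :
    #{S ∈ partCliques G P (univ \ {P x, P y}) | ∀ w ∈ S, G.Adj x w ∧ G.Adj y w}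
      ≤ #{K ∈ G.cliqueFinset r | x ∈ K ∧ y ∈ K} := by
  set I : Finset (Fin r) := univ \ {P x, P y}
  have hxI : P x ∉ insert (P y) I := by simp [I, hP]
  have hyI : P y ∉ I := by simp [I]
  have hcover : insert (P x) (insert (P y) I) = univ := by ext; simp [I]; tauto
  refine card_le_card_of_injOn (fun S => insert x (insert y S)) (fun S hS => ?_)
    (fun S₁ hS₁ S₂ hS₂ h => ?_)
  · obtain ⟨hS, hN⟩ := mem_filter.1 hS
    have hyS := insert_mem_partCliques hS hyI fun w hw => (hN w hw).2
    have hxyS := insert_mem_partCliques hyS hxI fun w hw => by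
      rcases mem_insert.1 hw with rfl | hw
      exacts [hxy, (hN w hw).1]
    rw [hcover] at hxyS
    exact mem_filter.2 ⟨mem_cliqueFinset_of_mem_partCliques_univ hxyS, by simp, by simp⟩
  · have hx : ∀ S ∈ partCliques G P I, x ∉ insert y S := fun S hS h => by
      rcases mem_insert.1 h with h | h
      exacts [hxy.ne h, hxI (mem_insert_of_mem (apply_mem_of_mem_partCliques hS h))]
    have hy : ∀ S ∈ partCliques G P I, y ∉ S := fun S hS h =>
      hyI (apply_mem_of_mem_partCliques hS h)
    have hS₁ := (mem_filter.1 hS₁).1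
    have hS₂ := (mem_filter.1 hS₂).1
    rw [← erase_insert (hy S₁ hS₁), ← erase_insert (hx S₁ hS₁), ← erase_insert (hy S₂ hS₂),
      ← erase_insert (hx S₂ hS₂)]
    exact congrArg (fun K => (K.erase x).erase y) h

variable {n : ℕ} {δ : ℝ}

lemma card_partCliques_sub_le_card_cliques (hsize : ∀ i : Fin r, #{u | P u = i} = n)
    (hdeg : ∀ (ℓ : Fin r) (v : V), P v ≠ ℓ → (1 - δ) * n ≤ #{u | P u = ℓ ∧ G.Adj v u})
    {x y : V} (hxy : G.Adj x y) (hP : P x ≠ P y) :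
    (#(partCliques G P (univ \ {P x, P y})) : ℝ) - 2 * δ * #(univ \ {P x, P y}) * n *
        ((univ \ {P x, P y}).sup fun k => #(partCliques G P ((univ \ {P x, P y}).erase k)))
      ≤ #{K ∈ G.cliqueFinset r | x ∈ K ∧ y ∈ K} := by
  set I : Finset (Fin r) := univ \ {P x, P y}
  have hbad := card_filter_mem_not_adj_or_not_adj_le hsize hdeg I
    (x := x) (y := y) (by simp [I]) (by simp [I])
  have hsplit := (Nat.cast_le (α := ℝ)).2 <|
    card_partCliques_le (G := G) (P := P) I fun w => G.Adj x w ∧ G.Adj y w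
  rw [Nat.cast_add, Nat.cast_mul] at hsplit
  set M := I.sup fun k => #(partCliques G P (I.erase k))
  have hgood : (#{S ∈ partCliques G P I | ∀ w ∈ S, G.Adj x w ∧ G.Adj y w} : ℝ)
      ≤ #{K ∈ G.cliqueFinset r | x ∈ K ∧ y ∈ K} := by
    exact_mod_cast card_filter_forall_adj_le_card_cliques hxy hP
  have hbadM := mul_le_mul_of_nonneg_right hbad (Nat.cast_nonneg (α := ℝ) M)
  linarith

lemma exists_superset_mem_partCliques (hsize : ∀ i : Fin r, #{u | P u = i} = n)
    (hdeg : ∀ (ℓ : Fin r) (v : V), P v ≠ ℓ → (1 - δ) * n ≤ #{u | P u = ℓ ∧ G.Adj v u})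
    (hn : 0 < n) (hδ0 : 0 ≤ δ) {J : Finset (Fin r)} {T : Finset V}
    (hT : T ∈ partCliques G P J) (I : Finset (Fin r)) (hIJ : Disjoint I J)
    (hδ : δ * (#I + #J - 1) < 1) :
    ∃ S, T ⊆ S ∧ S ∈ partCliques G P (I ∪ J) := by
  induction I using Finset.induction_on with
  | empty => exact ⟨T, subset_rfl, by simpa using hT⟩
  | @insert a I ha ih =>
    have haJ : a ∉ J := disjoint_left.1 hIJ (mem_insert_self a I)
    have hIJ' : Disjoint I J := disjoint_of_subset_left (subset_insert a I) hIJ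
    rw [card_insert_of_notMem ha] at hδ
    push_cast at hδ
    obtain ⟨S, hTS, hS⟩ := ih hIJ' (by nlinarith)
    have haIJ : a ∉ I ∪ J := by simp [ha, haJ]
    have hδS : δ * #S < 1 := by
      rw [(mem_partCliques.1 hS).2.2, card_union_of_disjoint hIJ']
      push_cast; linarith
    obtain ⟨v, rfl, hv⟩ := exists_forall_adj_of_mul_card_lt hsize hdeg hn a S
      (fun t ht h => haIJ (h ▸ apply_mem_of_mem_partCliques hS ht)) hδS
    refine ⟨insert v S, hTS.trans (subset_insert v S), ?_⟩
    rw [insert_union]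
    exact insert_mem_partCliques hS haIJ fun w hw => (hv w hw).symm

lemma exists_mem_cliqueFinset_of_adj (hsize : ∀ i : Fin r, #{u | P u = i} = n)
    (hdeg : ∀ (ℓ : Fin r) (v : V), P v ≠ ℓ → (1 - δ) * n ≤ #{u | P u = ℓ ∧ G.Adj v u})
    (hδ0 : 0 ≤ δ) (hδ : δ * (r - 1) < 1) {x y : V} (hxy : G.Adj x y) (hP : P x ≠ P y) :
    ∃ K ∈ G.cliqueFinset r, x ∈ K ∧ y ∈ K := by
  have hn : 0 < n := hsize (P x) ▸ card_pos.2 ⟨x, by simp⟩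
  have hxy_mem : {x, y} ∈ partCliques G P {P x, P y} := by
    refine insert_mem_partCliques ?_ (by simpa using hP) (by simpa using hxy)
    simpa using insert_mem_partCliques empty_mem_partCliques (notMem_empty (P y)) (by simp)
  have hcard : (#(univ \ {P x, P y}) : ℝ) + #{P x, P y} = r := by
    rw [← Nat.cast_add, card_sdiff_add_card_eq_card (subset_univ _), card_univ,
      Fintype.card_fin]
  obtain ⟨K, hxyK, hK⟩ := exists_superset_mem_partCliques hsize hdeg hn hδ0 hxy_mem
    (univ \ {P x, P y}) sdiff_disjoint (by rw [hcard]; exact hδ)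
  rw [sdiff_union_of_subset (subset_univ _)] at hK
  exact ⟨K, mem_cliqueFinset_of_mem_partCliques_univ hK, hxyK (by simp), hxyK (by simp)⟩

end PartCliques

theorem stmt_16_general {V : Type*} [Fintype V] [DecidableEq V] {r n : ℕ}
    (δ : ℝ) (hδ0 : 0 ≤ δ) (hδ1 : δ ≤ 1 / (2 * r))
    (G : SimpleGraph V) (P : V → Fin r)
    (hpart : ∀ u v, G.Adj u v → P u ≠ P v)
    (hsize : ∀ i : Fin r, (Finset.univ.filter fun v => P v = i).card = n)
    (hdeg : ∀ (ℓ : Fin r) (v : V), P v ≠ ℓ →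
      (1 - δ) * n ≤ ((Finset.univ.filter fun u => P u = ℓ ∧ G.Adj v u).card : ℝ)) :
    ∀ x y : V, G.Adj x y →
      (((partCliques G P (Finset.univ \ {P x, P y})).card : ℝ)
          - 2 * δ * (r - 2) * n *
            (((Finset.univ.filter fun k : Fin r => k ≠ P x ∧ k ≠ P y).sup
              fun k => (partCliques G P (Finset.univ \ {P x, P y, k})).card : ℕ) : ℝ)
        ≤ (((G.cliqueFinset r).filter fun K => x ∈ K ∧ y ∈ K).card : ℝ)) ∧
      (δ ≤ 1 / (8 * r) →
        0 < ((G.cliqueFinset r).filter fun K => x ∈ K ∧ y ∈ K).card) := by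
  intro x y hxy
  have hP : P x ≠ P y := hpart x y hxy
  set I : Finset (Fin r) := univ \ {P x, P y}
  have hr : 2 ≤ r := by simpa [card_pair hP] using card_le_univ {P x, P y}
  have hI : (#I : ℝ) = r - 2 := by
    rw [card_univ_sdiff, Fintype.card_fin, card_pair hP, Nat.cast_sub hr]
    norm_num
  refine ⟨?_, fun _ => ?_⟩
  · have hsup : (univ.filter fun k : Fin r => k ≠ P x ∧ k ≠ P y).sup
        (fun k => #(partCliques G P (univ \ {P x, P y, k})))
        = I.sup fun k => #(partCliques G P (I.erase k)) := by
      refine sup_congr (by ext; simp [I]) fun k _ => ?_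
      congr 2; ext; simp [I]; tauto
    rw [hsup, ← hI]
    exact card_partCliques_sub_le_card_cliques hsize hdeg hxy hP
  · have hr' : (2 : ℝ) ≤ r := by exact_mod_cast hr
    rw [le_div_iff₀ (by positivity)] at hδ1
    obtain ⟨K, hK, hxK, hyK⟩ :=
      exists_mem_cliqueFinset_of_adj hsize hdeg hδ0 (by nlinarith) hxy hP
    exact card_pos.2 ⟨K, mem_filter.2 ⟨hK, hxK, hyK⟩⟩

/-- lower bound on the number of r-cliques containing a fixed edge, and the
fact that when δ ≤ 1/(8r) every edge lies in at least one copy of K_r. -/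
theorem stmt_16 {V : Type*} [Fintype V] [DecidableEq V] {r n : ℕ} (hr : 3 ≤ r)
    (δ : ℝ) (hδ0 : 0 ≤ δ) (hδ1 : δ ≤ 1 / (2 * r))
    (G : SimpleGraph V) (P : V → Fin r)
    (hpart : ∀ u v, G.Adj u v → P u ≠ P v)
    (hsize : ∀ i : Fin r, (Finset.univ.filter fun v => P v = i).card = n)
    (hdeg : ∀ (ℓ : Fin r) (v : V), P v ≠ ℓ →
      (1 - δ) * n ≤ ((Finset.univ.filter fun u => P u = ℓ ∧ G.Adj v u).card : ℝ)) :
    ∀ x y : V, G.Adj x y →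
      (((partCliques G P (Finset.univ \ {P x, P y})).card : ℝ)
          - 2 * δ * (r - 2) * n *
            (((Finset.univ.filter fun k : Fin r => k ≠ P x ∧ k ≠ P y).sup
              fun k => (partCliques G P (Finset.univ \ {P x, P y, k})).card : ℕ) : ℝ)
        ≤ (((G.cliqueFinset r).filter fun K => x ∈ K ∧ y ∈ K).card : ℝ)) ∧
      (δ ≤ 1 / (8 * r) →
        0 < ((G.cliqueFinset r).filter fun K => x ∈ K ∧ y ∈ K).card) :=
  stmt_16_general δ hδ0 hδ1 G P hpart hsize hdeg
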